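/- On ℝ² with coordinates (u, v) and ℝⁿ with coordinates x, the metric g = 2du dv − 2(sin(v) − ∑ᵢ aᵢ(cos(xᵢ) − 1)) du² + ∑ᵢ dxᵢ² on ℝ^{n+2} is 2π-periodic in all coordinates and descends to the torus 𝕋^{n+2} = ℝ^{n+2}/2πℤ^{n+2}; the curve γ̃(t) = (ln t, 0, …, 0), t ∈ (0, ∞), is an inextensible geodesic of g on ℝ^{n+2}, so the induced compact Lorentzian manifold (𝕋^{n+2}, g) is geodesically incomplete. -/

import Mathlib

open scoped BigOperators

noncomputable def pd {m : ℕ} (i : Fin m) (f : (Fin m → ℝ) → ℝ) (x : Fin m → ℝ) : ℝ :=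
  fderiv ℝ f x (Pi.single i 1)

noncomputable def christoffel {m : ℕ} (g : (Fin m → ℝ) → Matrix (Fin m) (Fin m) ℝ)
    (x : Fin m → ℝ) (k i j : Fin m) : ℝ :=
  (1 / 2) * ∑ l : Fin m, (g x)⁻¹ k l *
    (pd i (fun y => g y l j) x + pd j (fun y => g y l i) x - pd l (fun y => g y i j) x)

def IsGeodesicOn {m : ℕ} (g : (Fin m → ℝ) → Matrix (Fin m) (Fin m) ℝ)
    (γ : ℝ → Fin m → ℝ) (s : Set ℝ) : Prop :=
  ContDiffOn ℝ 2 γ s ∧ ∀ t ∈ s, ∀ k : Fin m,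
    deriv (deriv γ) t k =
      -∑ i : Fin m, ∑ j : Fin m, christoffel g (γ t) k i j * deriv γ t i * deriv γ t j

/-- The metric `g = 2 du dv − 2(sin v − ∑ aᵢ(cos xᵢ − 1)) du² + ∑ dxᵢ²` on `ℝ^{n+2}`,
with coordinates `p 0 = u`, `p 1 = v`, `p (i+2) = xᵢ`. -/
noncomputable def cpMetric {n : ℕ} (a : Fin n → ℝ)
    (p : Fin (n + 2) → ℝ) : Matrix (Fin (n + 2)) (Fin (n + 2)) ℝ :=
  Matrix.of fun i j =>
    if i = 0 ∧ j = 0 then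
      -2 * (Real.sin (p 1) - ∑ k : Fin n, a k * (Real.cos (p k.succ.succ) - 1))
    else if (i = 0 ∧ j = 1) ∨ (i = 1 ∧ j = 0) then 1
    else if i = j ∧ i ≠ 0 ∧ i ≠ 1 then 1 else 0

noncomputable def logCurve {n : ℕ} (t : ℝ) : Fin (n + 2) → ℝ := fun k =>
  if k = 0 then Real.log t else 0

/-! The coefficients of `g` do not involve `u` and involve `v, xᵢ` only through `sin` and `cos`,
whence periodicity. On the `u`-axis `v = xᵢ = 0` the metric is the constant matrix of
`2 du dv + ∑ dxᵢ²`, an involutive permutation matrix, and the only first derivative that enters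
`Γᵏ_uu` is `∂_v g_uu = -2`; hence `Γᵏ_uu = δᵏ_u`, the geodesic equation for `(u(t), 0, …, 0)`
reduces to `u'' = -u'²`, and `u = ln t` solves it. Since `ln t → -∞` as `t → 0⁺`, no translate of
this curve extends even continuously to all of `ℝ`. -/

open Filter Topology

lemma fderiv_apply_eq_zero_of_forall_add_smul_eq {𝕜 E F : Type*} [NontriviallyNormedField 𝕜]
    [NormedAddCommGroup E] [NormedSpace 𝕜 E] [NormedAddCommGroup F] [NormedSpace 𝕜 F]
    {f : E → F} {v : E} (h : ∀ x (s : 𝕜), f (x + s • v) = f x) (x : E) :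
    fderiv 𝕜 f x v = 0 := by
  by_cases hf : DifferentiableAt 𝕜 f x
  · simp [← hf.lineDeriv_eq_fderiv, lineDeriv, h]
  · simp [fderiv_zero_of_not_differentiableAt hf]

namespace cpMetric

variable {n : ℕ} (a : Fin n → ℝ)

lemma add_two_pi_mul_int (p : Fin (n + 2) → ℝ) (z : Fin (n + 2) → ℤ) :
    cpMetric a (fun k => p k + 2 * Real.pi * (z k : ℝ)) = cpMetric a p := by
  have hsin (k) : Real.sin (p k + 2 * Real.pi * z k) = Real.sin (p k) := by
    rw [mul_comm, Real.sin_add_int_mul_two_pi]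
  have hcos (k) : Real.cos (p k + 2 * Real.pi * z k) = Real.cos (p k) := by
    rw [mul_comm, Real.cos_add_int_mul_two_pi]
  ext i j
  simp only [cpMetric, Matrix.of_apply, hsin, hcos]

lemma add_smul_single_zero (p : Fin (n + 2) → ℝ) (s : ℝ) :
    cpMetric a (p + s • Pi.single 0 1) = cpMetric a p := by
  ext i j
  simp [cpMetric, Fin.succ_ne_zero]

lemma pd_zero_apply (i j : Fin (n + 2)) (p : Fin (n + 2) → ℝ) :
    pd 0 (fun y => cpMetric a y i j) p = 0 :=
  fderiv_apply_eq_zero_of_forall_add_smul_eq (fun x s => by rw [add_smul_single_zero]) p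

lemma eq_permMatrix_swap {p : Fin (n + 2) → ℝ} (hv : p 1 = 0)
    (hx : ∀ k : Fin n, p k.succ.succ = 0) :
    cpMetric a p = (Equiv.swap 0 1 : Equiv.Perm (Fin (n + 2))).permMatrix ℝ := by
  ext i j
  have h_one_ne_zero : (1 : Fin (n + 2)) ≠ 0 := by simp
  simp only [cpMetric, Matrix.of_apply, hv, hx, Real.sin_zero, Real.cos_zero, sub_self, mul_zero,
    Finset.sum_const_zero, PEquiv.toMatrix_apply, Equiv.toPEquiv_apply, Option.mem_def,
    Option.some.injEq, Equiv.swap_apply_def]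
  split_ifs <;> grind

lemma inv_eq_self {p : Fin (n + 2) → ℝ} (hv : p 1 = 0) (hx : ∀ k : Fin n, p k.succ.succ = 0) :
    (cpMetric a p)⁻¹ = cpMetric a p := by
  rw [eq_permMatrix_swap a hv hx]
  refine Matrix.inv_eq_right_inv ?_
  rw [← Matrix.permMatrix_mul, Equiv.swap_mul_self, Matrix.permMatrix_one]

lemma hasFDerivAt_apply_zero_zero {p : Fin (n + 2) → ℝ} (hv : p 1 = 0)
    (hx : ∀ k : Fin n, p k.succ.succ = 0) :
    HasFDerivAt (fun y => cpMetric a y 0 0)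
      ((-2 : ℝ) • (ContinuousLinearMap.proj 1 : (Fin (n + 2) → ℝ) →L[ℝ] ℝ)) p := by
  have hsin : HasFDerivAt (fun y : Fin (n + 2) → ℝ => Real.sin (y 1))
      (ContinuousLinearMap.proj 1 : (Fin (n + 2) → ℝ) →L[ℝ] ℝ) p := by
    simpa [hv, Function.comp_def] using
      (Real.hasDerivAt_sin (p 1)).comp_hasFDerivAt p (hasFDerivAt_apply (𝕜 := ℝ) 1 p)
  have hcos (k : Fin n) : HasFDerivAt
      (fun y : Fin (n + 2) → ℝ => a k * (Real.cos (y k.succ.succ) - 1))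
      (0 : (Fin (n + 2) → ℝ) →L[ℝ] ℝ) p := by
    simpa [hx k, Function.comp_def] using (((Real.hasDerivAt_cos _).comp_hasFDerivAt p
      (hasFDerivAt_apply (𝕜 := ℝ) k.succ.succ p)).sub_const 1).const_mul (a k)
  have hsum : HasFDerivAt
      (fun y : Fin (n + 2) → ℝ => ∑ k : Fin n, a k * (Real.cos (y k.succ.succ) - 1))
      (0 : (Fin (n + 2) → ℝ) →L[ℝ] ℝ) p := by
    simpa using HasFDerivAt.fun_sum (u := Finset.univ) fun k _ => hcos k
  have h := (hsin.fun_sub hsum).const_mul (-2 : ℝ)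
  rwa [sub_zero] at h

lemma pd_apply_zero_zero {p : Fin (n + 2) → ℝ} (hv : p 1 = 0)
    (hx : ∀ k : Fin n, p k.succ.succ = 0) (l : Fin (n + 2)) :
    pd l (fun y => cpMetric a y 0 0) p = if l = 1 then -2 else 0 := by
  rw [pd, (hasFDerivAt_apply_zero_zero a hv hx).fderiv]
  by_cases hl : l = 1 <;> simp [hl, eq_comm]

lemma christoffel_zero_zero {p : Fin (n + 2) → ℝ} (hv : p 1 = 0)
    (hx : ∀ k : Fin n, p k.succ.succ = 0) (k : Fin (n + 2)) :
    christoffel (cpMetric a) p k 0 0 = if k = 0 then 1 else 0 := by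
  rw [christoffel, inv_eq_self a hv hx]
  simp only [pd_zero_apply, pd_apply_zero_zero a hv hx, eq_permMatrix_swap a hv hx]
  by_cases hk : k = 0 <;> by_cases hk1 : k = 1 <;>
    simp_all [PEquiv.toMatrix_apply, Equiv.swap_apply_def]

end cpMetric

theorem sum_sum_mul_single_mul_single {ι R : Type*} [Fintype ι] [DecidableEq ι]
    [NonUnitalNonAssocSemiring R] (Γ : ι → ι → R) (i₀ : ι) (c : R) :
    ∑ i, ∑ j, Γ i j * (Pi.single i₀ c : ι → R) i * (Pi.single i₀ c : ι → R) j =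
      Γ i₀ i₀ * c * c := by
  simp [Pi.single_apply]

section logCurve

variable {n : ℕ}

lemma logCurve_eq_single (t : ℝ) : logCurve (n := n) t = Pi.single 0 (Real.log t) := by
  ext k
  simp [logCurve, Pi.single_apply]

lemma logCurve_apply_one (t : ℝ) : logCurve (n := n) t 1 = 0 := by
  simp [logCurve_eq_single]

lemma logCurve_apply_succ_succ (t : ℝ) (k : Fin n) : logCurve (n := n) t k.succ.succ = 0 := by
  simp [logCurve_eq_single, Fin.succ_ne_zero]

lemma contDiffOn_logCurve : ContDiffOn ℝ 2 (logCurve (n := n)) (Set.Ioi 0) := by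
  refine contDiffOn_pi.2 fun k => ?_
  by_cases hk : k = 0
  · simp only [logCurve, hk, if_true]
    exact (Real.contDiffOn_log.mono fun t ht => ne_of_gt ht).of_le le_top
  · simpa [logCurve, hk] using contDiffOn_const

lemma hasDerivAt_logCurve {t : ℝ} (ht : t ≠ 0) :
    HasDerivAt (logCurve (n := n)) (Pi.single 0 t⁻¹) t := by
  refine hasDerivAt_pi.2 fun k => ?_
  by_cases hk : k = 0
  · simpa [logCurve, hk] using Real.hasDerivAt_log ht
  · simpa [logCurve, hk] using hasDerivAt_const t (0 : ℝ)

lemma deriv_deriv_logCurve {t : ℝ} (ht : 0 < t) :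
    deriv (deriv (logCurve (n := n))) t = Pi.single 0 (-(t ^ 2)⁻¹) := by
  have hderiv : deriv (logCurve (n := n)) =ᶠ[𝓝 t] fun s => Pi.single 0 s⁻¹ := by
    filter_upwards [eventually_ne_nhds ht.ne'] with s hs using (hasDerivAt_logCurve hs).deriv
  rw [hderiv.deriv_eq]
  refine (hasDerivAt_pi.2 fun k => ?_).deriv
  by_cases hk : k = 0
  · simpa [hk] using hasDerivAt_inv ht.ne'
  · simpa [hk] using hasDerivAt_const t (0 : ℝ)

lemma not_continuous_of_eqOn_logCurve_add {δ : ℝ → Fin (n + 2) → ℝ} (c : Fin (n + 2) → ℝ)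
    (h : Set.EqOn δ (fun t => logCurve t + c) (Set.Ioi 0)) : ¬ Continuous δ := by
  intro hδ
  have hbot : Tendsto (fun t => δ t 0) (𝓝[>] 0) atBot := by
    refine (tendsto_atBot_add_const_right _ (c 0) Real.tendsto_log_nhdsGT_zero).congr' ?_
    filter_upwards [self_mem_nhdsWithin] with t ht
    simp [h ht, logCurve]
  exact not_tendsto_nhds_of_tendsto_atBot hbot _
    (((continuous_apply 0).comp hδ).tendsto 0 |>.mono_left nhdsWithin_le_nhds)

end logCurve

theorem isGeodesicOn_logCurve {n : ℕ} (a : Fin n → ℝ) :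
    IsGeodesicOn (cpMetric a) logCurve (Set.Ioi 0) := by
  refine ⟨contDiffOn_logCurve, fun t ht k => ?_⟩
  rw [deriv_deriv_logCurve ht, (hasDerivAt_logCurve ht.ne').deriv,
    sum_sum_mul_single_mul_single,
    cpMetric.christoffel_zero_zero a (logCurve_apply_one t) (logCurve_apply_succ_succ t)]
  by_cases hk : k = 0 <;> simp [hk]
  field_simp

/-- The metric `g` is `2π`-periodic in all coordinates (so it descends
to the torus `𝕋^{n+2}`), the curve `γ̃(t) = (ln t, 0, …, 0)` is a geodesic on `(0,∞)`,
and it admits no extension to a complete geodesic, even modulo the deck group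
`2πℤ^{n+2}`: the induced compact Lorentzian manifold is geodesically incomplete. -/
theorem stmt_17 (n : ℕ) (a : Fin n → ℝ) :
    (∀ (p : Fin (n + 2) → ℝ) (z : Fin (n + 2) → ℤ),
      cpMetric a (fun k => p k + 2 * Real.pi * (z k : ℝ)) = cpMetric a p) ∧
    IsGeodesicOn (cpMetric a) (logCurve (n := n)) (Set.Ioi 0) ∧
    ¬ ∃ (δ : ℝ → Fin (n + 2) → ℝ) (z : Fin (n + 2) → ℤ),
        IsGeodesicOn (cpMetric a) δ Set.univ ∧
        ∀ t ∈ Set.Ioi (0 : ℝ), δ t = fun k => logCurve (n := n) t k + 2 * Real.pi * (z k : ℝ) := by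
  refine ⟨cpMetric.add_two_pi_mul_int a, isGeodesicOn_logCurve a, ?_⟩
  rintro ⟨δ, z, ⟨hδ, -⟩, hext⟩
  exact not_continuous_of_eqOn_logCurve_add _ hext (continuousOn_univ.mp hδ.continuousOn)
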